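/- arXiv:2605.16684 — 2 statements merged into one kernel-verified Lean document; each statement's English description precedes it below -/
import Mathlib

section
/- Let n be an even positive integer with n ≥ 2. Consider the map sending a pair (i, m) to the unordered pair {i, (i + m) mod n}, where i ∈ {0, 1, ..., n−1}, and m ranges over {1, ..., n/2} if i < n/2 and over {1, ..., n/2 − 1} if i ≥ n/2. This map is a bijection onto the set of all unordered pairs of distinct elements of {0, 1, ..., n−1}. (In other words, the paper's split-bound half-sweep assignment for odd polynomial order accounts for every unordered pair of distinct quadrature indices exactly once, with each thread in the first half performing n/2 flux computations and each thread in the second half performing n/2 − 1.) -/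
private lemma mod_inj_aux {n i m m' : ℕ} (hm : m < n) (hm' : m' < n)
    (h : (i + m) % n = (i + m') % n) : m = m' := by
  have h1 : m ≡ m' [MOD n] := Nat.ModEq.add_left_cancel' i h
  have h2 : m % n = m' % n := h1
  rwa [Nat.mod_eq_of_lt hm, Nat.mod_eq_of_lt hm'] at h2

private lemma half_sweep_ne {n i m : ℕ} (hi : i < n) (hm1 : 1 ≤ m) (hm : m < n) :
    (i + m) % n ≠ i := by
  intro h
  have h' : (i + m) % n = (i + 0) % n := by
    rw [h, Nat.add_zero, Nat.mod_eq_of_lt hi]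
  have := mod_inj_aux hm (by omega) h'
  omega

/--
Let `n` be an even positive integer with `n ≥ 2`. The map sending a pair
`(i, m)` to the unordered pair `{i, (i + m) % n}`, where `i ∈ {0, …, n−1}` and `m` ranges
over `{1, …, n/2}` if `i < n/2` and over `{1, …, n/2 − 1}` if `i ≥ n/2`, is a bijection
onto the set of all unordered pairs of distinct elements of `{0, …, n−1}` (represented as
two-element finsets of naturals contained in `{0, …, n−1}`).
-/
theorem half_sweep_odd_order_bijection (n : ℕ) (heven : Even n) (h2 : 2 ≤ n) :
    Set.BijOn (fun p : ℕ × ℕ => ({p.1, (p.1 + p.2) % n} : Finset ℕ))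
      {p : ℕ × ℕ | p.1 < n ∧ 1 ≤ p.2 ∧
        (if p.1 < n / 2 then p.2 ≤ n / 2 else p.2 ≤ n / 2 - 1)}
      {s : Finset ℕ | s.card = 2 ∧ ∀ x ∈ s, x < n} := by
  obtain ⟨k, hk⟩ := heven
  have hn0 : 0 < n := by omega
  have hk1 : 1 ≤ k := by omega
  have hdiv : n / 2 = k := by omega
  refine ⟨?_, ?_, ?_⟩
  · -- MapsTo
    rintro ⟨i, m⟩ ⟨hi, hm1, hm2⟩
    dsimp only at hi hm1 hm2 ⊢
    have hmn : m < n := by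
      by_cases h : i < n / 2
      · rw [if_pos h] at hm2; omega
      · rw [if_neg h] at hm2; omega
    refine ⟨?_, ?_⟩
    · exact Finset.card_pair (Ne.symm (half_sweep_ne hi hm1 hmn))
    · intro x hx
      simp only [Finset.mem_insert, Finset.mem_singleton] at hx
      rcases hx with rfl | rfl
      · exact hi
      · exact Nat.mod_lt _ hn0
  · -- InjOn
    rintro ⟨i, m⟩ ⟨hi, hm1, hm2⟩ ⟨i', m'⟩ ⟨hi', hm1', hm2'⟩ heq
    dsimp only at hi hm1 hm2 hi' hm1' hm2' heq
    have hmk : m ≤ k := by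
      by_cases h : i < n / 2
      · rw [if_pos h] at hm2; omega
      · rw [if_neg h] at hm2; omega
    have hmk' : m' ≤ k := by
      by_cases h : i' < n / 2
      · rw [if_pos h] at hm2'; omega
      · rw [if_neg h] at hm2'; omega
    have hmn : m < n := by omega
    have hmn' : m' < n := by omega
    set j := (i + m) % n with hj
    set j' := (i' + m') % n with hj'
    have hji : j ≠ i := half_sweep_ne hi hm1 hmn
    have hji' : j' ≠ i' := half_sweep_ne hi' hm1' hmn'
    have hmem1 : i = i' ∨ i = j' := by
      have : i ∈ ({i', j'} : Finset ℕ) := by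
        rw [← heq]; exact Finset.mem_insert_self i {j}
      simpa using this
    have hmem2 : i' = i ∨ i' = j := by
      have : i' ∈ ({i, j} : Finset ℕ) := by
        rw [heq]; exact Finset.mem_insert_self i' {j'}
      simpa using this
    rcases hmem1 with rfl | hswap
    · -- same first coordinate
      have hjj : j = j' := by
        have : j ∈ ({i, j'} : Finset ℕ) := by
          rw [← heq]; simp
        simpa [hji] using this
      have hm : m = m' := mod_inj_aux hmn hmn' (by rw [← hj, ← hj', hjj])
      rw [hm]
    · -- swapped case: i = j', i' = j
      exfalso
      have hij : i' = j := by
        rcases hmem2 with rfl | h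
        · omega
        · exact h
      have hdvd : n ∣ m + m' := by
        have e1 : (i + m + m') % n = i := by
          rw [← Nat.mod_add_mod, ← hj, ← hij, ← hj', ← hswap]
        have e2 : (i + (m + m')) % n = (i + 0) % n := by
          rw [← Nat.add_assoc, e1, Nat.add_zero, Nat.mod_eq_of_lt hi]
        have h0 : (m + m') % n = 0 % n := Nat.ModEq.add_left_cancel' i e2
        exact Nat.dvd_of_mod_eq_zero (by simpa using h0)
      have hge : n ≤ m + m' := Nat.le_of_dvd (by omega) hdvd
      have hmkk : m = k := by omega
      have hmkk' : m' = k := by omega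
      have hik : i < k := by
        by_cases h : i < n / 2
        · omega
        · rw [if_neg h] at hm2; omega
      have hik' : i' < k := by
        by_cases h : i' < n / 2
        · omega
        · rw [if_neg h] at hm2'; omega
      have : i' = i + k := by
        rw [hij, hj, hmkk, Nat.mod_eq_of_lt (by omega)]
      omega
  · -- SurjOn
    rintro s ⟨hcard, hbound⟩
    obtain ⟨a, b, hab, rfl⟩ := Finset.card_eq_two.mp hcard
    have ha : a < n := hbound a (by simp)
    have hb : b < n := hbound b (by simp)
    rcases Nat.lt_or_ge a b with hlt | hge
    · rcases le_or_gt (b - a) k with hle | hgt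
      · refine ⟨(a, b - a), ⟨by omega, by omega, ?_⟩, ?_⟩
        · dsimp only
          rw [hdiv]
          split <;> omega
        · dsimp only
          have : (a + (b - a)) % n = b := by
            rw [Nat.add_sub_cancel' (by omega), Nat.mod_eq_of_lt hb]
          rw [this]
      · refine ⟨(b, n - (b - a)), ⟨hb, by omega, ?_⟩, ?_⟩
        · dsimp only
          rw [hdiv]
          split <;> omega
        · dsimp only
          have : (b + (n - (b - a))) % n = a := by
            have e : b + (n - (b - a)) = n + a := by omega
            rw [e, Nat.add_mod_left, Nat.mod_eq_of_lt ha]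
          rw [this, Finset.pair_comm]
    · have hlt : b < a := by omega
      rcases le_or_gt (a - b) k with hle | hgt
      · refine ⟨(b, a - b), ⟨hb, by omega, ?_⟩, ?_⟩
        · dsimp only
          rw [hdiv]
          split <;> omega
        · dsimp only
          have : (b + (a - b)) % n = a := by
            rw [Nat.add_sub_cancel' (by omega), Nat.mod_eq_of_lt ha]
          rw [this, Finset.pair_comm]
      · refine ⟨(a, n - (a - b)), ⟨ha, by omega, ?_⟩, ?_⟩
        · dsimp only
          rw [hdiv]
          split <;> omega
        · dsimp only
          have : (a + (n - (a - b))) % n = b := by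
            have e : a + (n - (a - b)) = n + b := by omega
            rw [e, Nat.add_mod_left, Nat.mod_eq_of_lt hb]
          rw [this]
end

section
/- Let ρ⁺, ρ⁻, p⁺, p⁻ be positive real numbers with ρ⁺ ≠ ρ⁻, and let φ⁺, φ⁻ be real numbers. Set b⁺ = ρ⁺/(2p⁺), b⁻ = ρ⁻/(2p⁻), and define G(ρ⁺, p⁺, φ⁺; ρ⁻, p⁻, φ⁻) = (1/2) · (⟨b⟩ · ⟨ρ⟩_log / b⁻) · (φ⁺ − φ⁻), where ⟨b⟩ = (b⁺ + b⁻)/2 and ⟨ρ⟩_log = (ρ⁺ − ρ⁻)/(log ρ⁺ − log ρ⁻). Then the swap relation G(ρ⁻, p⁻, φ⁻; ρ⁺, p⁺, φ⁺) = −G(ρ⁺, p⁺, φ⁺; ρ⁻, p⁻, φ⁻) holds if and only if b⁺ = b⁻ or φ⁺ = φ⁻. In particular, when b⁺ ≠ b⁻ and φ⁺ ≠ φ⁻, the gravity term is not a simple sign flip under the swap of states. -/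
/-- The gravity contribution to the entropy-stable two-point momentum flux:
`G(ρ⁺, p⁺, φ⁺; ρ⁻, p⁻, φ⁻) = (1/2) · (⟨b⟩ · ⟨ρ⟩_log / b⁻) · (φ⁺ − φ⁻)`, where
`b⁺ = ρ⁺/(2p⁺)`, `b⁻ = ρ⁻/(2p⁻)`, `⟨b⟩ = (b⁺ + b⁻)/2`, and
`⟨ρ⟩_log = (ρ⁺ − ρ⁻)/(log ρ⁺ − log ρ⁻)`. -/
noncomputable def gravityTerm (ρp pp φp ρm pm φm : ℝ) : ℝ :=
  (1 / 2) * ((ρp / (2 * pp) + ρm / (2 * pm)) / 2 *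
    ((ρp - ρm) / (Real.log ρp - Real.log ρm)) / (ρm / (2 * pm))) * (φp - φm)

/--
Let `ρ⁺, ρ⁻, p⁺, p⁻ > 0` with `ρ⁺ ≠ ρ⁻`, and let `φ⁺, φ⁻` be real. With
`b⁺ = ρ⁺/(2p⁺)` and `b⁻ = ρ⁻/(2p⁻)`, the sign-flip relation
`G(ρ⁻, p⁻, φ⁻; ρ⁺, p⁺, φ⁺) = −G(ρ⁺, p⁺, φ⁺; ρ⁻, p⁻, φ⁻)` holds if and only if
`b⁺ = b⁻` or `φ⁺ = φ⁻`. In particular, when `b⁺ ≠ b⁻` and `φ⁺ ≠ φ⁻`, the gravity term is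
not a simple sign flip under the swap of states.
-/
theorem gravity_term_sign_flip_iff (ρp ρm pp pm φp φm : ℝ)
    (hρp : 0 < ρp) (hρm : 0 < ρm) (hpp : 0 < pp) (hpm : 0 < pm) (hne : ρp ≠ ρm) :
    gravityTerm ρm pm φm ρp pp φp = -gravityTerm ρp pp φp ρm pm φm
      ↔ ρp / (2 * pp) = ρm / (2 * pm) ∨ φp = φm := by
  have hbp : (0:ℝ) < ρp / (2 * pp) := by positivity
  have hbm : (0:ℝ) < ρm / (2 * pm) := by positivity
  have hbp' := hbp.ne'
  have hbm' := hbm.ne'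
  have hlogne : Real.log ρp - Real.log ρm ≠ 0 :=
    sub_ne_zero.2 fun h =>
      hne (Real.log_injOn_pos (Set.mem_Ioi.2 hρp) (Set.mem_Ioi.2 hρm) h)
  have hL : (ρp - ρm) / (Real.log ρp - Real.log ρm) ≠ 0 :=
    div_ne_zero (sub_ne_zero.2 hne) hlogne
  have hsym : (ρm - ρp) / (Real.log ρm - Real.log ρp)
      = (ρp - ρm) / (Real.log ρp - Real.log ρm) := by
    rw [← neg_sub ρp ρm, ← neg_sub (Real.log ρp), neg_div_neg_eq]
  unfold gravityTerm
  rw [hsym]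
  set L := (ρp - ρm) / (Real.log ρp - Real.log ρm) with hLdef
  set bp := ρp / (2 * pp) with hbpdef
  set bm := ρm / (2 * pm) with hbmdef
  have hA : bp + bm ≠ 0 := by positivity
  have hdiff : (1 / 2) * ((bm + bp) / 2 * L / bp) * (φm - φp)
      - (-((1 / 2) * ((bp + bm) / 2 * L / bm) * (φp - φm)))
      = L * (bp + bm) * (φm - φp) * (bm - bp) / (4 * bp * bm) := by
    field_simp
    ring
  rw [← sub_eq_zero, hdiff, div_eq_zero_iff]
  have hden : (4:ℝ) * bp * bm ≠ 0 := by positivity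
  constructor
  · rintro (h | h)
    · rcases mul_eq_zero.1 h with h | h
      · rcases mul_eq_zero.1 h with h | h
        · exact absurd (mul_eq_zero.1 h) (by simp [hL, hA])
        · exact Or.inr (by linarith [sub_eq_zero.1 h])
      · exact Or.inl (by linarith [sub_eq_zero.1 h])
    · exact absurd h hden
  · rintro (h | h)
    · left; rw [h]; ring
    · left; rw [h]; ring
end
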